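/- For any pattern p ∈ S_m that avoids 321, there exists a constant L (depending on p and n) such that every ω ∈ S̃_n with length ℓ(ω) > L contains p; consequently only finitely many elements of S̃_n avoid p. -/

import Mathlib

/-- `ω` contains the pattern `p`: some increasing sequence of indices has values in
the same relative order as `p`. -/
def ContainsPattern {m : ℕ} (ω : ℤ → ℤ) (p : Equiv.Perm (Fin m)) : Prop :=
  ∃ f : Fin m → ℤ, StrictMono f ∧ ∀ a b : Fin m, p a < p b ↔ ω (f a) < ω (f b)

/-- The Coxeter length of an affine permutation: the number of affine inversions. -/
noncomputable def affineLength (n : ℕ) (ω : ℤ → ℤ) : ℕ :=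
  Set.ncard {q : ℤ × ℤ | 1 ≤ q.1 ∧ q.1 ≤ (n : ℤ) ∧ q.1 < q.2 ∧ ω q.2 < ω q.1}

/-!
An affine permutation of large length has an inversion `(i, j)` of large height `ω i - ω j`, and
by periodicity we may take `i < j < i + n`. The entries at `i + n ℤ` and at `j + n ℤ` then form two
increasing strands, the second lying roughly `(ω i - ω j) / n` periods below the first.
A 321-avoiding pattern splits into its left-to-right maxima and its remaining entries, both
increasing; we send the maxima to the first strand and the rest to the second, choosing the periods
by induction on the length of the pattern and doubling all earlier periods at each step to make
room, which is where the bound `2 ^ m` comes from. Finiteness follows because bounded length bounds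
the window `ω 1, …, ω n`.
-/

open Function

theorem lt_iff_lt_of_inversions_iff {ι β γ : Type*} [LinearOrder ι] [LinearOrder β]
    [LinearOrder γ] {f : ι → β} {g : ι → γ} (hf : Injective f) (hg : Injective g)
    (h : ∀ a b, a < b → (f b < f a ↔ g b < g a)) (a b : ι) : f a < f b ↔ g a < g b := by
  rcases lt_trichotomy a b with hab | rfl | hab
  · have := not_congr (h a b hab)
    rwa [not_lt, not_lt, (hf.ne hab.ne).le_iff_lt, (hg.ne hab.ne).le_iff_lt] at this
  · simp
  · exact h b a hab

theorem strictMono_add_mul {ι : Type*} [Preorder ι] {base col : ι → ℤ} {X N : ℤ}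
    (hbase : ∀ t, X ≤ base t ∧ base t < X + N) (hcol : StrictMono col) :
    StrictMono fun t => base t + N * col t := by
  intro a b hab
  have hN : 0 < N := by linarith [hbase a]
  have : N * (col a + 1) ≤ N * col b :=
    mul_le_mul_of_nonneg_left (Int.add_one_le_iff.2 (hcol hab)) hN.le
  linarith [hbase a, hbase b]

theorem strictMono_snoc {k : ℕ} {β : Type*} [Preorder β] {f : Fin k → β} {x : β} (hf : StrictMono f)
    (hx : ∀ t, f t < x) : StrictMono (Fin.snoc (α := fun _ => β) f x) := by
  intro a b hab
  induction b using Fin.lastCases with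
  | last =>
    obtain ⟨a, rfl⟩ := Fin.exists_castSucc_eq.2 hab.ne
    simpa using hx a
  | cast b =>
    obtain ⟨a, rfl⟩ := Fin.exists_castSucc_eq.2 (Fin.ne_last_of_lt hab)
    simpa using hf (Fin.castSucc_lt_castSucc_iff.1 hab)

section Pattern

variable {α : Type*} [LinearOrder α] {k : ℕ}

def IsLeftToRightMax (v : Fin k → α) (a : Fin k) : Prop := ∀ s < a, v s < v a

instance (v : Fin k → α) : DecidablePred (IsLeftToRightMax v) := fun _ => by
  unfold IsLeftToRightMax
  infer_instance

def Avoids321 (v : Fin k → α) : Prop :=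
  ¬ ∃ i j l : Fin k, i < j ∧ j < l ∧ v l < v j ∧ v j < v i

variable {v : Fin k → α}

theorem IsLeftToRightMax.lt_of_apply_lt {a b : Fin k} (ha : IsLeftToRightMax v a)
    (hab : v a < v b) : a < b := by
  by_contra! hba
  rcases hba.lt_or_eq with hba | rfl
  · exact (ha b hba).not_gt hab
  · exact hab.false

theorem exists_isLeftToRightMax_le_apply (s : Fin k) :
    ∃ u ≤ s, IsLeftToRightMax v u ∧ v s ≤ v u := by
  induction s using WellFoundedLT.induction with
  | _ s ih =>
    by_cases hs : IsLeftToRightMax v s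
    · exact ⟨s, le_rfl, hs, le_rfl⟩
    · obtain ⟨t, hts, hst⟩ : ∃ t < s, v s ≤ v t := by
        simpa [IsLeftToRightMax] using hs
      obtain ⟨u, hut, hu, htu⟩ := ih t hts
      exact ⟨u, hut.trans hts.le, hu, hst.trans htu⟩

theorem exists_isLeftToRightMax_apply_gt (hv : Injective v) {x : Fin k}
    (hx : ¬ IsLeftToRightMax v x) :
    ∃ u < x, IsLeftToRightMax v u ∧ v x < v u := by
  obtain ⟨s, hsx, hxs⟩ : ∃ s < x, v x ≤ v s := by simpa [IsLeftToRightMax] using hx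
  obtain ⟨u, hus, hu, hsu⟩ := exists_isLeftToRightMax_le_apply (v := v) s
  have hux : u < x := hus.trans_lt hsx
  exact ⟨u, hux, hu, (hxs.trans hsu).lt_of_ne (hv.ne hux.ne')⟩

theorem exists_first_isLeftToRightMax_apply_gt (hv : Injective v) {x : Fin k}
    (hx : ¬ IsLeftToRightMax v x) :
    ∃ u < x, IsLeftToRightMax v u ∧ v x < v u ∧
      ∀ a, IsLeftToRightMax v a → v x < v a → u ≤ a := by
  obtain ⟨u₀, hu₀x, hu₀⟩ := exists_isLeftToRightMax_apply_gt hv hx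
  obtain ⟨u, hu, hmin⟩ := wellFounded_lt.has_min {a | IsLeftToRightMax v a ∧ v x < v a} ⟨u₀, hu₀⟩
  exact ⟨u, (not_lt.mp (hmin u₀ hu₀)).trans_lt hu₀x, hu.1, hu.2,
    fun a ha hxa => not_lt.mp (hmin a ⟨ha, hxa⟩)⟩

theorem Avoids321.apply_lt_of_not_isLeftToRightMax (h321 : Avoids321 v) (hv : Injective v)
    {b x : Fin k} (hb : ¬ IsLeftToRightMax v b) (hbx : b < x) : v b < v x := by
  obtain ⟨s, hsb, hs⟩ := exists_isLeftToRightMax_apply_gt hv hb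
  by_contra! hxb
  exact h321 ⟨s, b, x, hsb, hbx, hxb.lt_of_ne (hv.ne hbx.ne'), hs.2⟩

theorem isLeftToRightMax_init_iff {v : Fin (k + 1) → α} {a : Fin k} :
    IsLeftToRightMax (Fin.init v) a ↔ IsLeftToRightMax v a.castSucc := by
  refine ⟨fun h s hs => ?_, fun h s hs => h s.castSucc (Fin.castSucc_lt_castSucc_iff.2 hs)⟩
  obtain ⟨s, rfl⟩ := Fin.exists_castSucc_eq.2 (Fin.ne_last_of_lt hs)
  exact h s (Fin.castSucc_lt_castSucc_iff.1 hs)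

theorem Avoids321.init {v : Fin (k + 1) → α} (h321 : Avoids321 v) : Avoids321 (Fin.init v) :=
  fun ⟨i, j, l, hij, hjl, hv⟩ => h321 ⟨i.castSucc, j.castSucc, l.castSucc, hij, hjl, hv⟩

/-- Entry `t` is to be placed `col t` periods along one of two increasing strands: the upper one
for left-to-right maxima, the lower one for the other entries, which lies `c` periods (and a
fraction) below the upper one. `le_add_iff` says that this reproduces the relative order of an
upper and a later lower entry; `last_lt_add` leaves room to append further entries. -/
structure IsTwoStrandLayout (v : Fin (k + 1) → α) (c : ℤ) (col : Fin (k + 1) → ℤ) : Prop where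
  strictMono : StrictMono col
  le_add_iff : ∀ a b, a < b → IsLeftToRightMax v a → ¬ IsLeftToRightMax v b →
    (col b ≤ col a + c ↔ v b < v a)
  last_lt_add : ∀ a, IsLeftToRightMax v a →
    (∀ b, a < b → ¬ IsLeftToRightMax v b → v b < v a) → col (Fin.last k) < col a + c

theorem isTwoStrandLayout_zero (v : Fin 1 → α) {c : ℤ} (hc : 0 < c) :
    IsTwoStrandLayout v c 0 where
  strictMono a b hab := absurd (Subsingleton.elim (α := Fin 1) a b) hab.ne
  le_add_iff a b hab := absurd (Subsingleton.elim (α := Fin 1) a b) hab.ne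
  last_lt_add _ _ _ := by simpa using hc

/-- Doubling the old indices turns a layout for `c / 2` into one for `c` and makes room for the
new last entry. -/
theorem IsTwoStrandLayout.snoc {v : Fin (k + 2) → α} {c : ℤ} {col : Fin (k + 1) → ℤ}
    (hcol : IsTwoStrandLayout (Fin.init v) (c / 2) col) (hc : 0 < c) {x : ℤ}
    (hx : ∀ t, 2 * col t < x)
    (hcross : ¬ IsLeftToRightMax v (Fin.last _) → ∀ a, IsLeftToRightMax v a.castSucc →
      (x ≤ 2 * col a + c ↔ v (Fin.last _) < v a.castSucc))
    (htail : ∀ a, IsLeftToRightMax v a.castSucc →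
      (∀ b, a.castSucc < b → ¬ IsLeftToRightMax v b → v b < v a.castSucc) →
      x < 2 * col a + c) :
    IsTwoStrandLayout v c (Fin.snoc (α := fun _ => ℤ) (fun t => 2 * col t) x) where
  strictMono := strictMono_snoc (fun _ _ h => by simpa using hcol.strictMono h) hx
  le_add_iff a b hab ha hb := by
    obtain ⟨a, rfl⟩ := Fin.exists_castSucc_eq.2 (Fin.ne_last_of_lt hab)
    induction b using Fin.lastCases with
    | last => simpa using hcross hb a ha
    | cast b =>
      have := hcol.le_add_iff a b (Fin.castSucc_lt_castSucc_iff.1 hab)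
        (isLeftToRightMax_init_iff.2 ha) (mt isLeftToRightMax_init_iff.1 hb)
      simp only [Fin.snoc_castSucc, Fin.init] at this ⊢
      rw [← this]
      omega
  last_lt_add a ha hdom := by
    induction a using Fin.lastCases with
    | last => simpa using hc
    | cast a => simpa using htail a ha hdom

theorem IsTwoStrandLayout.snoc_of_isLeftToRightMax {v : Fin (k + 2) → α} {c : ℤ}
    {col : Fin (k + 1) → ℤ} (hcol : IsTwoStrandLayout (Fin.init v) (c / 2) col) (hc : 0 < c)
    (hlast : IsLeftToRightMax v (Fin.last _)) :
    ∃ col', IsTwoStrandLayout v c col' := by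
  refine ⟨_, hcol.snoc (x := 2 * col (Fin.last k) + 1) hc (fun t => ?_) (absurd hlast)
    fun a ha hdom => ?_⟩
  · have := hcol.strictMono.monotone (Fin.le_last t)
    omega
  · have := hcol.last_lt_add a (isLeftToRightMax_init_iff.2 ha) fun b hab hb =>
      hdom b.castSucc (Fin.castSucc_lt_castSucc_iff.2 hab) (mt isLeftToRightMax_init_iff.2 hb)
    omega

/-- A new entry that is not a left-to-right maximum goes one step short of `c` periods after the
first maximum `u` above it. -/
theorem IsTwoStrandLayout.snoc_of_not_isLeftToRightMax {v : Fin (k + 2) → α} (hv : Injective v)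
    (h321 : Avoids321 v) {c : ℤ} {col : Fin (k + 1) → ℤ}
    (hcol : IsTwoStrandLayout (Fin.init v) (c / 2) col) (hc : 0 < c)
    (hlast : ¬ IsLeftToRightMax v (Fin.last _)) :
    ∃ col', IsTwoStrandLayout v c col' := by
  obtain ⟨u, hu_lt, hu, hlast_u, hmin⟩ := exists_first_isLeftToRightMax_apply_gt hv hlast
  obtain ⟨u, rfl⟩ := Fin.exists_castSucc_eq.2 hu_lt.ne
  have hmin' : ∀ a, IsLeftToRightMax v a.castSucc → v (Fin.last _) < v a.castSucc →
      col u ≤ col a := fun a ha hlast_a =>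
    hcol.strictMono.monotone (Fin.castSucc_le_castSucc_iff.1 (hmin _ ha hlast_a))
  refine ⟨_, hcol.snoc (x := 2 * col u + c - 1) hc (fun t => ?_) (fun _ a ha => ?_)
    fun a ha hdom => ?_⟩
  · have hdom_u := hcol.last_lt_add u (isLeftToRightMax_init_iff.2 hu) fun b _ hb =>
      (h321.apply_lt_of_not_isLeftToRightMax hv (mt isLeftToRightMax_init_iff.2 hb)
        (Fin.castSucc_lt_last b)).trans hlast_u
    have := hcol.strictMono.monotone (Fin.le_last t)
    omega
  · refine ⟨fun h => ?_, fun h => by linarith [hmin' a ha h]⟩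
    by_contra h'
    have ha_last : v a.castSucc < v (Fin.last _) :=
      (not_lt.1 h').lt_of_ne (hv.ne (Fin.castSucc_lt_last a).ne)
    have := hcol.strictMono
      (Fin.castSucc_lt_castSucc_iff.1 (ha.lt_of_apply_lt (ha_last.trans hlast_u)))
    omega
  · linarith [hmin' a ha (hdom _ (Fin.castSucc_lt_last a) hlast)]

theorem exists_isTwoStrandLayout {k : ℕ} (v : Fin (k + 1) → α) (hv : Injective v)
    (h321 : Avoids321 v) {c : ℤ} (hc : 2 ^ k ≤ c) : ∃ col, IsTwoStrandLayout v c col := by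
  induction k generalizing c with
  | zero => exact ⟨0, isTwoStrandLayout_zero v (by linarith [pow_zero (2 : ℤ)])⟩
  | succ k ih =>
    have hc0 : 0 < c := lt_of_lt_of_le (by positivity) hc
    have hc2 : 2 ^ k ≤ c / 2 := (Int.le_ediv_iff_mul_le two_pos).2 (by rwa [← pow_succ])
    obtain ⟨col, hcol⟩ := ih (Fin.init v) (hv.comp (Fin.castSucc_injective _)) h321.init hc2
    by_cases hlast : IsLeftToRightMax v (Fin.last _)
    · exact hcol.snoc_of_isLeftToRightMax hc0 hlast
    · exact hcol.snoc_of_not_isLeftToRightMax hv h321 hc0 hlast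

theorem IsTwoStrandLayout.apply_lt_apply_iff {v : Fin (k + 1) → α} (hv : Injective v)
    (h321 : Avoids321 v) {c : ℤ} {col : Fin (k + 1) → ℤ} (hcol : IsTwoStrandLayout v c col)
    (hc : 0 ≤ c) {N X Y : ℤ} (hN : 0 < N) (hlo : N * c < X - Y) (hhi : X - Y ≤ N * (c + 1))
    {a b : Fin (k + 1)} (hab : a < b) :
    v b < v a ↔ (if IsLeftToRightMax v b then X else Y) + N * col b <
      (if IsLeftToRightMax v a then X else Y) + N * col a := by
  have hmul : N * col a < N * col b := mul_lt_mul_of_pos_left (hcol.strictMono hab) hN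
  have hXY : Y < X := by nlinarith
  by_cases hb : IsLeftToRightMax v b
  · exact iff_of_false (hb a hab).asymm (by split_ifs <;> linarith)
  by_cases ha : IsLeftToRightMax v a
  · rw [if_neg hb, if_pos ha, ← hcol.le_add_iff a b hab ha hb]
    constructor
    · intro h
      nlinarith
    · intro h
      by_contra! h'
      nlinarith
  · exact iff_of_false (h321.apply_lt_of_not_isLeftToRightMax hv ha hab).asymm
      (by rw [if_neg hb, if_neg ha]; linarith)

end Pattern

section Affine

variable {n : ℕ} {ω : ℤ → ℤ}

def affineInversions (n : ℕ) (ω : ℤ → ℤ) : Set (ℤ × ℤ) :=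
  {q | 1 ≤ q.1 ∧ q.1 ≤ (n : ℤ) ∧ q.1 < q.2 ∧ ω q.2 < ω q.1}

theorem periodic_sub_self (hper : ∀ i : ℤ, ω (i + n) = ω i + n) :
    Periodic (fun z => ω z - z) (n : ℤ) := fun z => by
  simp only [hper]
  ring

theorem apply_add_mul (hper : ∀ i : ℤ, ω (i + n) = ω i + n) (z q : ℤ) :
    ω (z + n * q) = ω z + n * q := by
  have h : ω (z + q * n) - (z + q * n) = ω z - z := (periodic_sub_self hper).int_mul q z
  rw [mul_comm] at h
  linarith

theorem exists_abs_apply_sub_le (hn : 0 < n) (hper : ∀ i : ℤ, ω (i + n) = ω i + n) :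
    ∃ C, ∀ z, |ω z - z| ≤ C := by
  obtain ⟨C, hC⟩ := ((Set.finite_Ico 0 (n : ℤ)).image fun z => |ω z - z|).bddAbove
  refine ⟨C, fun z => ?_⟩
  obtain ⟨y, hy, hzy⟩ := (periodic_sub_self hper).exists_mem_Ico₀ (by exact_mod_cast hn) z
  exact hzy ▸ hC ⟨y, hy, rfl⟩

theorem affineInversions_finite (hn : 0 < n) (hper : ∀ i : ℤ, ω (i + n) = ω i + n) :
    (affineInversions n ω).Finite := by
  obtain ⟨C, hC⟩ := exists_abs_apply_sub_le hn hper
  refine ((Set.finite_Icc 1 (n : ℤ)).prod (Set.finite_Icc 1 (n + 2 * C))).subset ?_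
  rintro ⟨a, b⟩ ⟨ha1, han, hab, hba⟩
  have ha := abs_le.1 (hC a)
  have hb := abs_le.1 (hC b)
  exact ⟨⟨ha1, han⟩, by simp only at *; omega, by simp only at *; omega⟩

/-- Each period `q` with `a < b + n q` and `ω (b + n q) < ω a` gives an inversion `(a, b + n q)`. -/
theorem sub_sub_sub_le_affineLength (hn : 0 < n) (hper : ∀ i : ℤ, ω (i + n) = ω i + n)
    {a : ℤ} (ha1 : 1 ≤ a) (han : a ≤ n) (b : ℤ) :
    (ω a - a) - (ω b - b) ≤ n * (affineLength n ω + 1) := by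
  have hn' : (0 : ℤ) < n := by exact_mod_cast hn
  set lo := (a - b) / n
  set hi := (ω a - ω b - 1) / n
  have hlo := Int.mul_ediv_self_le (x := a - b) hn'.ne'
  have hlo' := Int.lt_mul_ediv_self_add (x := a - b) hn'
  have hhi := Int.mul_ediv_self_le (x := ω a - ω b - 1) hn'.ne'
  have hhi' := Int.lt_mul_ediv_self_add (x := ω a - ω b - 1) hn'
  have hcard : (Finset.Ioc lo hi).card ≤ affineLength n ω := by
    rw [← Set.ncard_coe_finset]
    refine Set.ncard_le_ncard_of_injOn (fun q => (a, b + n * q)) (fun q hq => ?_)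
      (fun q₁ _ q₂ _ h => ?_) (affineInversions_finite hn hper)
    · obtain ⟨hq1, hq2⟩ := Finset.mem_Ioc.1 hq
      have h1 : n * (lo + 1) ≤ n * q := mul_le_mul_of_nonneg_left (by omega) hn'.le
      have h2 : n * q ≤ n * hi := mul_le_mul_of_nonneg_left hq2 hn'.le
      refine ⟨ha1, han, by simp only; linarith, ?_⟩
      simp only [apply_add_mul hper]
      linarith
    · simpa [hn.ne'] using h
  rw [Int.card_Ioc] at hcard
  have : n * (hi - lo + 1) ≤ n * ((affineLength n ω : ℤ) + 1) :=
    mul_le_mul_of_nonneg_left (by omega) hn'.le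
  linarith

theorem sum_Icc_one_id (n : ℕ) : ∑ i ∈ Finset.Icc (1 : ℤ) n, i = ((n + 1).choose 2 : ℤ) := by
  induction n with
  | zero => simp
  | succ n ih =>
    have h := Finset.insert_Icc_right_eq_Icc_succ (a := (1 : ℤ)) (b := n) (by simp)
    rw [Order.succ_eq_add_one] at h
    rw [Nat.cast_succ, ← h, Finset.sum_insert (by simp), ih, Nat.choose_succ_succ' (n + 1),
      Nat.choose_one_right]
    push_cast
    ring

theorem abs_apply_sub_le_affineLength (hn : 0 < n) (hper : ∀ i : ℤ, ω (i + n) = ω i + n)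
    (hsum : ∑ i ∈ Finset.Icc (1 : ℤ) n, ω i = ((n + 1).choose 2 : ℤ)) {r : ℤ} (hr1 : 1 ≤ r)
    (hrn : r ≤ n) : |ω r - r| ≤ n * (affineLength n ω + 1) := by
  have hne : (Finset.Icc (1 : ℤ) n).Nonempty := ⟨1, by simp; omega⟩
  obtain ⟨k, hk, hωk⟩ := Finset.exists_le_of_sum_le hne (f := ω) (g := id)
    (by simp [hsum, sum_Icc_one_id])
  obtain ⟨l, hl, hωl⟩ := Finset.exists_le_of_sum_le hne (f := id) (g := ω)
    (by simp [hsum, sum_Icc_one_id])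
  rw [Finset.mem_Icc] at hk hl
  have := sub_sub_sub_le_affineLength hn hper hr1 hrn k
  have := sub_sub_sub_le_affineLength hn hper hl.1 hl.2 r
  simp only [id] at hωk hωl
  exact abs_le.2 ⟨by linarith, by linarith⟩

theorem setOf_affineLength_le_finite (hn : 0 < n) (L : ℕ) :
    {ω : ℤ → ℤ | (∀ i : ℤ, ω (i + n) = ω i + n) ∧
      (∑ i ∈ Finset.Icc (1 : ℤ) n, ω i = ((n + 1).choose 2 : ℤ)) ∧
      affineLength n ω ≤ L}.Finite := by
  set B : ℤ := n * (L + 1)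
  refine Set.Finite.of_finite_image (f := fun ω (r : Set.Icc (1 : ℤ) n) => ω r) ?_ ?_
  · refine (Set.Finite.pi (t := fun r : Set.Icc (1 : ℤ) n => Set.Icc (r - B) (r + B))
      fun _ => Set.finite_Icc _ _).subset ?_
    rintro _ ⟨ω, ⟨hper, hsum, hlen⟩, rfl⟩ r -
    have h := abs_apply_sub_le_affineLength hn hper hsum r.2.1 r.2.2
    have : n * ((affineLength n ω : ℤ) + 1) ≤ B :=
      mul_le_mul_of_nonneg_left (by exact_mod_cast Nat.succ_le_succ hlen) (by positivity)
    have := abs_le.1 (h.trans this)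
    exact ⟨by linarith, by linarith⟩
  · rintro ω₁ ⟨hper₁, -⟩ ω₂ ⟨hper₂, -⟩ h
    funext z
    have hδ : Periodic (fun z => ω₁ z - ω₂ z) n := fun z => by simp only [hper₁, hper₂]; ring
    obtain ⟨y, hy, hzy⟩ := hδ.exists_mem_Ico (by exact_mod_cast hn) z 1
    have := congrFun h ⟨y, hy.1, by linarith [hy.2]⟩
    simp only at this hzy
    linarith

theorem affineLength_le_of_forall_sub_le (hω : Injective ω) (K : ℕ)
    (h : ∀ a b, 1 ≤ a → a ≤ (n : ℤ) → a < b → ω b < ω a → ω a - ω b ≤ K) :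
    affineLength n ω ≤ n * K := by
  calc affineLength n ω
      ≤ ((Finset.Icc (1 : ℤ) n ×ˢ Finset.Icc (1 : ℤ) K : Finset (ℤ × ℤ)) : Set (ℤ × ℤ)).ncard := by
        refine Set.ncard_le_ncard_of_injOn (fun q => (q.1, ω q.1 - ω q.2)) ?_ ?_
          (Finset.finite_toSet _)
        · rintro ⟨a, b⟩ ⟨ha1, han, hab, hba⟩
          simp only [Finset.coe_product, Set.mem_prod, Finset.coe_Icc, Set.mem_Icc] at *
          exact ⟨⟨ha1, han⟩, by omega, h a b ha1 han hab hba⟩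
        · rintro ⟨a₁, b₁⟩ - ⟨a₂, b₂⟩ - hq
          simp only [Prod.mk.injEq] at hq ⊢
          exact ⟨hq.1, hω (by rw [hq.1] at hq; linarith [hq.2])⟩
    _ = n * K := by rw [Set.ncard_coe_finset, Finset.card_product]; simp

theorem exists_lt_lt_add_apply_le (hn : 0 < n) (hper : ∀ i : ℤ, ω (i + n) = ω i + n)
    {i j : ℤ} (hij : i < j) (hω : ω j < ω i) : ∃ j', i < j' ∧ j' < i + n ∧ ω j' ≤ ω j := by
  have hn' : (0 : ℤ) < n := by exact_mod_cast hn
  set q := (j - i - 1) / n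
  have h1 := Int.mul_ediv_self_le (x := j - i - 1) hn'.ne'
  have h2 := Int.lt_mul_ediv_self_add (x := j - i - 1) hn'
  have hq : 0 ≤ n * q := mul_nonneg hn'.le (Int.ediv_nonneg (by omega) hn'.le)
  have hωj' : ω (j - n * q) = ω j - n * q := by
    simpa [sub_eq_add_neg] using apply_add_mul hper j (-q)
  refine ⟨j - n * q, by linarith, lt_of_le_of_ne (by linarith) fun h => ?_, by linarith⟩
  have := hper i
  rw [← h, hωj'] at this
  linarith

theorem containsPattern_of_inversion {m : ℕ} {p : Equiv.Perm (Fin m)} (h321 : Avoids321 p)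
    (hn : 0 < n) (hω : Injective ω) (hper : ∀ i : ℤ, ω (i + n) = ω i + n) {i j : ℤ}
    (hij : i < j) (hji : j < i + n) (hd : n * 2 ^ m < ω i - ω j) : ContainsPattern ω p := by
  cases m with
  | zero => exact ⟨finZeroElim, fun a => a.elim0, fun a => a.elim0⟩
  | succ k =>
    have hn' : (0 : ℤ) < n := by exact_mod_cast hn
    set c := (ω i - ω j - 1) / n
    have hlo := Int.mul_ediv_self_le (x := ω i - ω j - 1) hn'.ne'
    have hhi := Int.lt_mul_ediv_self_add (x := ω i - ω j - 1) hn'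
    have hc : 2 ^ k ≤ c := by
      refine (Int.le_ediv_iff_mul_le hn').2 ?_
      have : (2 : ℤ) ^ k * n ≤ n * 2 ^ (k + 1) := by
        rw [pow_succ]
        nlinarith [pow_pos (two_pos : (0 : ℤ) < 2) k]
      linarith
    obtain ⟨col, hcol⟩ := exists_isTwoStrandLayout p p.injective h321 hc
    let f : Fin (k + 1) → ℤ := fun t => (if IsLeftToRightMax p t then i else j) + n * col t
    have hf : StrictMono f :=
      strictMono_add_mul (X := i) (fun t => by split_ifs <;> omega) hcol.strictMono
    have hωf : ∀ t, ω (f t) = (if IsLeftToRightMax p t then ω i else ω j) + n * col t :=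
      fun t => by simp only [f]; split_ifs <;> exact apply_add_mul hper _ _
    refine ⟨f, hf, lt_iff_lt_of_inversions_iff p.injective (hω.comp hf.injective)
      fun a b hab => ?_⟩
    simp only [hωf]
    exact hcol.apply_lt_apply_iff p.injective h321 (le_trans (by positivity) hc) hn'
      (by linarith) (by linarith) hab

end Affine

theorem avoids_321_pattern_finitely_many (n m : ℕ) (hn : 2 ≤ n)
    (p : Equiv.Perm (Fin m))
    (h321 : ¬ ∃ i j k : Fin m, i < j ∧ j < k ∧ p k < p j ∧ p j < p i) :
    ∃ L : ℕ,
      (∀ ω : ℤ → ℤ, Function.Bijective ω →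
        (∀ i : ℤ, ω (i + n) = ω i + n) →
        (∑ i ∈ Finset.Icc (1 : ℤ) (n : ℤ), ω i = ((n + 1).choose 2 : ℤ)) →
        L < affineLength n ω → ContainsPattern ω p) ∧
      {ω : ℤ → ℤ | Function.Bijective ω ∧
        (∀ i : ℤ, ω (i + n) = ω i + n) ∧
        (∑ i ∈ Finset.Icc (1 : ℤ) (n : ℤ), ω i = ((n + 1).choose 2 : ℤ)) ∧
        ¬ ContainsPattern ω p}.Finite := by
  have hn0 : 0 < n := by omega
  have hlong : ∀ ω : ℤ → ℤ, Injective ω → (∀ i : ℤ, ω (i + n) = ω i + n) →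
      n * (n * 2 ^ m) < affineLength n ω → ContainsPattern ω p := by
    intro ω hω hper hlen
    obtain ⟨i, j, -, -, hij, hωij, hd⟩ : ∃ i j, 1 ≤ i ∧ i ≤ (n : ℤ) ∧ i < j ∧ ω j < ω i ∧
        ((n * 2 ^ m : ℕ) : ℤ) < ω i - ω j := by
      by_contra! h
      exact hlen.not_ge (affineLength_le_of_forall_sub_le hω _ h)
    obtain ⟨j', hij', hj'i, hωj'⟩ := exists_lt_lt_add_apply_le hn0 hper hij hωij
    exact containsPattern_of_inversion h321 hn0 hω hper hij' hj'i (by push_cast at hd; linarith)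
  refine ⟨n * (n * 2 ^ m), fun ω hω hper _ hlen => hlong ω hω.injective hper hlen, ?_⟩
  refine (setOf_affineLength_le_finite hn0 (n * (n * 2 ^ m))).subset ?_
  rintro ω ⟨hω, hper, hsum, hp⟩
  exact ⟨hper, hsum, not_lt.1 fun hlen => hp (hlong ω hω.injective hper hlen)⟩
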